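/- arXiv:1307.8411 — 4 statements merged into one kernel-verified Lean document; each statement's English description precedes it below -/
import Mathlib

section
/- Let A, B : X → Y be bounded linear operators between Banach spaces with dim N(A) < ∞, N(A) ∩ N(B) = {0}, and Y = B·N(A) ⊕ R(A). Then A + εB is invertible for all sufficiently small ε > 0. -/
/-!
Let `P` be a continuous projection onto the finite-dimensional kernel `N(A)`. The complement
hypotheses make `Φ = A + B P` bijective, hence an isomorphism of Banach spaces, and
`A + ε B = (Φ + ε B (1 - P)) ((1 - P) + ε P)`. The first factor is a small perturbation of `Φ`,
so it is invertible for small `ε`; the second is invertible for every `ε ≠ 0`, with inverse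
`(1 - P) + ε⁻¹ P`.
-/

open Filter Topology

namespace LinearMap

variable {R M N : Type*} [Ring R] [AddCommGroup M] [Module R M] [AddCommGroup N] [Module R N]
  {A B : M →ₗ[R] N} {P : M →ₗ[R] M}

theorem injective_add_comp_of_isProj (hP : IsProj (ker A) P) (hker : ker A ⊓ ker B = ⊥)
    (hdisj : Disjoint ((ker A).map B) (range A)) : Function.Injective (A + B ∘ₗ P) := by
  rw [← ker_eq_bot, eq_bot_iff]
  intro x hx
  have hBPx : B (P x) = A (-x) := by
    rw [map_neg, eq_neg_iff_add_eq_zero, add_comm]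
    exact hx
  have hBPx0 : B (P x) = 0 :=
    Submodule.disjoint_def.1 hdisj _ ⟨P x, hP.map_mem x, rfl⟩ ⟨-x, hBPx.symm⟩
  have hAx : x ∈ ker A := by
    simpa [hBPx0] using hBPx.symm
  rw [← hker]
  exact ⟨hAx, by rwa [← hP.map_id x hAx]⟩

theorem surjective_add_comp_of_isProj (hP : IsProj (ker A) P)
    (hcodisj : Codisjoint ((ker A).map B) (range A)) : Function.Surjective (A + B ∘ₗ P) := by
  intro y
  obtain ⟨_, ⟨n, hn, rfl⟩, _, ⟨m, rfl⟩, rfl⟩ :=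
    Submodule.mem_sup.1 (hcodisj.eq_top ▸ Submodule.mem_top : y ∈ (ker A).map B ⊔ range A)
  have hPm : P (P m) = P m := hP.map_id _ (hP.map_mem m)
  refine ⟨m - P m + n, ?_⟩
  simp [hPm, hP.map_id n hn, mem_ker.1 hn, mem_ker.1 (hP.map_mem m), add_comm]

end LinearMap

namespace IsIdempotentElem

variable {𝕜 R : Type*} [Ring R] {p : R}

theorem one_sub_add_smul_mul_one_sub_add_smul [CommSemiring 𝕜] [Algebra 𝕜 R]
    (hp : IsIdempotentElem p) (a b : 𝕜) :
    (1 - p + a • p) * (1 - p + b • p) = 1 - p + (a * b) • p := by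
  simp only [mul_add, add_mul, smul_mul_assoc, mul_smul_comm, smul_smul, hp.one_sub.eq,
    hp.mul_one_sub_self, hp.one_sub_mul_self, hp.eq, smul_zero, add_zero, zero_add, mul_comm b]

theorem isUnit_one_sub_add_smul [Field 𝕜] [Algebra 𝕜 R] (hp : IsIdempotentElem p) {a : 𝕜}
    (ha : a ≠ 0) : IsUnit (1 - p + a • p) :=
  ⟨⟨_, 1 - p + a⁻¹ • p,
    by rw [hp.one_sub_add_smul_mul_one_sub_add_smul, mul_inv_cancel₀ ha, one_smul, sub_add_cancel],
    by rw [hp.one_sub_add_smul_mul_one_sub_add_smul, inv_mul_cancel₀ ha, one_smul, sub_add_cancel]⟩,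
    rfl⟩

end IsIdempotentElem

section

variable {𝕜 E F : Type*} [NontriviallyNormedField 𝕜] [NormedAddCommGroup E] [NormedSpace 𝕜 E]
  [NormedAddCommGroup F] [NormedSpace 𝕜 F]

theorem ContinuousLinearEquiv.eventually_bijective_add_smul [CompleteSpace E] (e : E ≃L[𝕜] F)
    (C : E →L[𝕜] F) : ∀ᶠ ε in 𝓝 (0 : 𝕜), Function.Bijective ⇑((e : E →L[𝕜] F) + ε • C) := by
  have hlim : Tendsto (fun ε : 𝕜 => (e : E →L[𝕜] F) + ε • C) (𝓝 0) (𝓝 e) := by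
    simpa using tendsto_const_nhds.add ((tendsto_id (x := 𝓝 (0 : 𝕜))).smul_const C)
  filter_upwards [hlim.eventually_mem e.nhds] with ε ⟨e', he'⟩
  exact he' ▸ e'.bijective

theorem ContinuousLinearMap.add_smul_eq_comp_of_isIdempotentElem {A B : E →L[𝕜] F}
    {P : E →L[𝕜] E} (hP : IsIdempotentElem P) (hAP : A ∘L P = 0) (ε : 𝕜) :
    A + ε • B = (A + B ∘L P + ε • B ∘L (1 - P)) ∘L (1 - P + ε • P) := by
  ext x
  have hPP : P (P x) = P x := congrArg (· x) hP.eq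
  have hAPx : A (P x) = 0 := congrArg (· x) hAP
  simp [hPP, hAPx]
  module

end

/-- If `A, B : X →L[ℝ] Y` with `dim N(A) < ∞`,
`N(A) ∩ N(B) = {0}` and `Y = B·N(A) ⊕ R(A)`, then `A + εB` is invertible
(bijective, hence boundedly invertible by the open mapping theorem)
for all sufficiently small `ε > 0`. -/
theorem stmt2
    {X Y : Type*} [NormedAddCommGroup X] [NormedSpace ℝ X] [CompleteSpace X]
    [NormedAddCommGroup Y] [NormedSpace ℝ Y] [CompleteSpace Y]
    (A B : X →L[ℝ] Y)
    (hfin : FiniteDimensional ℝ (LinearMap.ker (A : X →ₗ[ℝ] Y)))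
    (hker : LinearMap.ker (A : X →ₗ[ℝ] Y) ⊓ LinearMap.ker (B : X →ₗ[ℝ] Y) = ⊥)
    (hsum : IsCompl (Submodule.map (B : X →ₗ[ℝ] Y) (LinearMap.ker (A : X →ₗ[ℝ] Y))) (LinearMap.range (A : X →ₗ[ℝ] Y))) :
    ∃ ε₀ > (0 : ℝ), ∀ ε : ℝ, 0 < ε → ε < ε₀ →
      Function.Bijective (A + ε • B) := by
  set K := LinearMap.ker (A : X →ₗ[ℝ] Y)
  obtain ⟨q, hq⟩ := (Submodule.ClosedComplemented.of_finiteDimensional K).exists_isTopCompl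
  set P := K.projectionL q hq
  have hP : LinearMap.IsProj K (P : X →ₗ[ℝ] X) :=
    ⟨K.projectionL_apply_mem hq, fun x hx => K.projectionL_apply_left hq ⟨x, hx⟩⟩
  have hΦ : Function.Bijective (A + B ∘L P) :=
    ⟨LinearMap.injective_add_comp_of_isProj hP hker hsum.disjoint,
      LinearMap.surjective_add_comp_of_isProj hP hsum.codisjoint⟩
  have hAP : A ∘L P = 0 := by
    ext x
    exact K.projectionL_apply_mem hq x
  obtain ⟨ε₀, hε₀, hsmall⟩ := Metric.eventually_nhds_iff.1 <|
    (ContinuousLinearEquiv.ofBijective (A + B ∘L P) (LinearMap.ker_eq_bot.2 hΦ.1)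
      (LinearMap.range_eq_top.2 hΦ.2)).eventually_bijective_add_smul (B ∘L (1 - P))
  refine ⟨ε₀, hε₀, fun ε hε hεε₀ => ?_⟩
  rw [ContinuousLinearMap.add_smul_eq_comp_of_isIdempotentElem
    (K.isIdempotentElem_projectionL hq) hAP]
  exact (hsmall (by rwa [Real.dist_0_eq_abs, abs_of_pos hε])).comp
    (ContinuousLinearMap.isUnit_iff_bijective.1
      ((K.isIdempotentElem_projectionL hq).isUnit_one_sub_add_smul hε.ne'))
end

section
/- Let A, B : X → Y be bounded linear operators between Banach spaces with dim N(A) < ∞, N(A) ∩ N(B) = {0}, and Y = B·N(A) ⊕ R(A) with projector P onto B·N(A) along R(A). Let B* : B·N(A) → N(A) be the inverse of the restriction of B to N(A). Then for every b ∈ Y there exist u, w ∈ X such that (A + εB)(u + (1/ε)w) → b as ε → 0; namely one may take w = B*Pb ∈ N(A) and u any preimage under A of (Id − P)b. -/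
open Filter Topology

/-
Since `A w = 0`, the singular term cancels: `(A + εB)(u + ε⁻¹w) = Au + Bw + εBu`, and with
`Au = b - Pb`, `Bw = Pb` this is `b + εBu`, which tends to `b`. The vectors `u` and `w` exist
because `Pb ∈ range P = B·N(A)` and `b - Pb ∈ ker P = R(A)`.
-/

theorem IsIdempotentElem.sub_apply_self_mem_ker {R M : Type*} [Ring R] [AddCommGroup M]
    [Module R M] {P : M →ₗ[R] M} (hP : IsIdempotentElem P) (b : M) :
    b - P b ∈ LinearMap.ker P := by
  rw [LinearMap.mem_ker, map_sub, ← Module.End.mul_apply, hP, sub_self]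

section Perturbation

variable {𝕜 X Y : Type*} [NormedField 𝕜] [SeminormedAddCommGroup X] [NormedSpace 𝕜 X]
  [SeminormedAddCommGroup Y] [NormedSpace 𝕜 Y]

theorem ContinuousLinearMap.add_smul_apply_add_inv_smul_of_apply_eq_zero (A B : X →L[𝕜] Y)
    (u : X) {w : X} (hw : A w = 0) {ε : 𝕜} (hε : ε ≠ 0) :
    (A + ε • B) (u + ε⁻¹ • w) = A u + B w + ε • B u := by
  rw [add_apply, smul_apply, map_add, map_add, map_smul, map_smul, hw, smul_zero, add_zero,
    smul_add, smul_inv_smul₀ hε]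
  abel

theorem tendsto_add_smul_nhdsWithin_zero (y v : Y) (s : Set 𝕜) :
    Tendsto (fun ε : 𝕜 => y + ε • v) (𝓝[s] 0) (𝓝 y) := by
  have h : Continuous fun ε : 𝕜 => y + ε • v := by fun_prop
  simpa using (h.tendsto 0).mono_left nhdsWithin_le_nhds

end Perturbation

theorem stmt3_general
    {X Y : Type*} [NormedAddCommGroup X] [NormedSpace ℝ X]
    [NormedAddCommGroup Y] [NormedSpace ℝ Y]
    (A B : X →L[ℝ] Y) (P : Y →L[ℝ] Y)
    (hP : P.comp P = P)
    (hPrange : LinearMap.range (P : Y →ₗ[ℝ] Y) = Submodule.map (B : X →ₗ[ℝ] Y) (LinearMap.ker (A : X →ₗ[ℝ] Y)))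
    (hPker : LinearMap.ker (P : Y →ₗ[ℝ] Y) = LinearMap.range (A : X →ₗ[ℝ] Y)) :
    ∀ b : Y, ∃ u w : X,
      w ∈ LinearMap.ker (A : X →ₗ[ℝ] Y) ∧ B w = P b ∧ A u = b - P b ∧
      Tendsto (fun ε : ℝ => (A + ε • B) (u + ε⁻¹ • w)) (𝓝[>] 0) (𝓝 b) := by
  intro b
  obtain ⟨w, hw, hBw : B w = P b⟩ : P b ∈ (LinearMap.ker (A : X →ₗ[ℝ] Y)).map (B : X →ₗ[ℝ] Y) :=
    hPrange ▸ LinearMap.mem_range_self _ b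
  have hPidem : IsIdempotentElem (P : Y →ₗ[ℝ] Y) :=
    ContinuousLinearMap.isIdempotentElem_toLinearMap_iff.mpr hP
  obtain ⟨u, hAu : A u = b - P b⟩ : b - P b ∈ LinearMap.range (A : X →ₗ[ℝ] Y) :=
    hPker ▸ hPidem.sub_apply_self_mem_ker b
  refine ⟨u, w, hw, hBw, hAu, ?_⟩
  refine (tendsto_add_smul_nhdsWithin_zero b (B u) _).congr' ?_
  filter_upwards [self_mem_nhdsWithin] with ε (hε : 0 < ε)
  rw [A.add_smul_apply_add_inv_smul_of_apply_eq_zero B u hw hε.ne', hAu, hBw, sub_add_cancel]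

/-- Under the hypotheses of the perturbation lemma, with `P` the
projector onto `B·N(A)` along `R(A)`, for every `b ∈ Y` there are `u, w`
(namely `w = B*Pb ∈ N(A)` and `u` a preimage under `A` of `(Id - P) b`)
such that `(A + εB)(u + ε⁻¹ w) → b` as `ε → 0`. -/
theorem stmt3
    {X Y : Type*} [NormedAddCommGroup X] [NormedSpace ℝ X] [CompleteSpace X]
    [NormedAddCommGroup Y] [NormedSpace ℝ Y] [CompleteSpace Y]
    (A B : X →L[ℝ] Y) (P : Y →L[ℝ] Y)
    (hfin : FiniteDimensional ℝ (LinearMap.ker (A : X →ₗ[ℝ] Y)))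
    (hker : LinearMap.ker (A : X →ₗ[ℝ] Y) ⊓ LinearMap.ker (B : X →ₗ[ℝ] Y) = ⊥)
    (hP : P.comp P = P)
    (hPrange : LinearMap.range (P : Y →ₗ[ℝ] Y) = Submodule.map (B : X →ₗ[ℝ] Y) (LinearMap.ker (A : X →ₗ[ℝ] Y)))
    (hPker : LinearMap.ker (P : Y →ₗ[ℝ] Y) = LinearMap.range (A : X →ₗ[ℝ] Y)) :
    ∀ b : Y, ∃ u w : X,
      w ∈ LinearMap.ker (A : X →ₗ[ℝ] Y) ∧ B w = P b ∧ A u = b - P b ∧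
      Tendsto (fun ε : ℝ => (A + ε • B) (u + ε⁻¹ • w)) (𝓝[>] 0) (𝓝 b) :=
  stmt3_general A B P hP hPrange hPker
end

section
/- Let A, B : X → Y be bounded linear operators between Banach spaces with dim N(A) < ∞, N(A) ∩ N(B) = {0}, and Y = B·N(A) ⊕ R(A) with projectors P (onto B·N(A)) and Id − P (onto R(A)). Let X̂ ⊆ X be a complement of N(A), A* : R(A) → X̂ the inverse of A restricted to X̂, and B* : B·N(A) → N(A) the inverse of B restricted to N(A). Then ‖(A*(Id−P) + (1/ε)B*P) − (A + εB)⁻¹‖ = O(1) as ε → 0. -/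
/-!
Put `R ε = S + ε⁻¹ • T`. Since `A S = 1 - P`, `A T = 0` and `B T = P`, one gets
`(A + ε B) R ε = 1 + ε B S`, a perturbation of the identity. Hence `A + ε B` has the right inverse
`R ε (1 + ε B S)⁻¹`, and `R ε - R ε (1 + ε B S)⁻¹ = (ε S B S + T B S) (1 + ε B S)⁻¹` stays bounded:
the singular factor `ε⁻¹` is cancelled by the `ε` of the perturbation. Injectivity of `A + ε B`
comes from the factorization `S (A + ε B) = (1 + ε S B) (1 - Q)`, which forces a kernel vector into
`N(A)`, where `B` is injective.
-/

open Filter Topology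

namespace ContinuousLinearMap

variable {𝕜 X Y : Type*} [NontriviallyNormedField 𝕜]
  [NormedAddCommGroup X] [NormedSpace 𝕜 X] [NormedAddCommGroup Y] [NormedSpace 𝕜 Y]

theorem injective_one_add_of_norm_lt_one {E : X →L[𝕜] X} (hE : ‖E‖ < 1) :
    Function.Injective (1 + E : X →L[𝕜] X) := by
  refine (injective_iff_map_eq_zero _).mpr fun x hx => ?_
  have hx' : E x = -x := eq_neg_of_add_eq_zero_right hx
  have : ‖x‖ ≤ ‖E‖ * ‖x‖ := by simpa [hx'] using E.le_opNorm x
  exact norm_eq_zero.mp (by nlinarith [norm_nonneg x])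

theorem norm_inv_oneSub_le [CompleteSpace Y] {E : Y →L[𝕜] Y} (hE : ‖E‖ < 1) :
    ‖(↑(Units.oneSub E hE)⁻¹ : Y →L[𝕜] Y)‖ ≤ (1 - ‖E‖)⁻¹ :=
  (tsum_geometric_le_of_norm_lt_one E hE).trans <| by
    linarith [show ‖(1 : Y →L[𝕜] Y)‖ ≤ 1 from norm_id_le]

theorem exists_inverse_of_comp_eq_one_add [CompleteSpace Y]
    {K : X →L[𝕜] Y} {R : Y →L[𝕜] X} {E : Y →L[𝕜] Y} (hK : Function.Injective K)
    (hKR : K.comp R = 1 + E) (hE : ‖E‖ ≤ 1 / 2) :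
    ∃ inv : Y →L[𝕜] X, inv.comp K = .id 𝕜 X ∧ K.comp inv = .id 𝕜 Y ∧
      ‖R - inv‖ ≤ 2 * ‖R.comp E‖ := by
  have hE' : ‖-E‖ < 1 := by rw [norm_neg]; linarith
  set u := Units.oneSub (-E) hE'
  set w : Y →L[𝕜] Y := ↑u⁻¹
  have hu : (u : Y →L[𝕜] Y) = 1 + E := by rw [Units.val_oneSub, sub_neg_eq_add]
  have hright : K.comp (R.comp w) = .id 𝕜 Y := by
    rw [← comp_assoc, hKR, ← hu]
    exact u.mul_inv
  refine ⟨R.comp w, ?_, hright, ?_⟩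
  · ext x
    exact hK (by simpa using congr($hright (K x)))
  · have hdiff : R - R.comp w = (R.comp E).comp w := by
      calc R - R.comp w = R.comp ((u : Y →L[𝕜] Y) * w - w) := by
            rw [u.mul_inv, comp_sub]; rfl
        _ = (R.comp E).comp w := by rw [hu, add_mul, one_mul, add_sub_cancel_left]; rfl
    have hw : ‖w‖ ≤ 2 := by
      refine (norm_inv_oneSub_le hE').trans ?_
      rw [norm_neg]
      calc (1 - ‖E‖)⁻¹ ≤ (1 / 2)⁻¹ := by gcongr; linarith
        _ = 2 := by norm_num
    calc ‖R - R.comp w‖ = ‖(R.comp E).comp w‖ := by rw [hdiff]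
      _ ≤ ‖R.comp E‖ * ‖w‖ := opNorm_comp_le _ _
      _ ≤ 2 * ‖R.comp E‖ := by rw [mul_comm]; gcongr

end ContinuousLinearMap

section Splitting

open ContinuousLinearMap

variable {𝕜 X Y : Type*} [NontriviallyNormedField 𝕜]
  [NormedAddCommGroup X] [NormedSpace 𝕜 X] [NormedAddCommGroup Y] [NormedSpace 𝕜 Y]
  {A B : X →L[𝕜] Y} {P : Y →L[𝕜] Y} {Q : X →L[𝕜] X} {S T : Y →L[𝕜] X}

theorem apply_apply_eq_self_sub_apply (hQ : IsIdempotentElem Q)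
    (hQrange : LinearMap.range (Q : X →ₗ[𝕜] X) = LinearMap.ker (A : X →ₗ[𝕜] Y))
    (hPker : LinearMap.ker (P : Y →ₗ[𝕜] Y) = LinearMap.range (A : X →ₗ[𝕜] Y))
    (hS1 : ∀ y, Q (S y) = 0) (hS2 : ∀ y, A (S y) = y - P y) (x : X) :
    S (A x) = x - Q x := by
  have hPA : P (A x) = 0 := by
    change A x ∈ LinearMap.ker (P : Y →ₗ[𝕜] Y)
    exact hPker ▸ LinearMap.mem_range_self _ x
  have hmem : S (A x) - x ∈ LinearMap.range (Q : X →ₗ[𝕜] X) := by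
    rw [hQrange, LinearMap.mem_ker]
    simp [hS2, hPA]
  have hfix : Q (S (A x) - x) = S (A x) - x :=
    (LinearMap.IsIdempotentElem.mem_range_iff hQ.toLinearMap).mp hmem
  rw [map_sub, hS1, zero_sub, eq_sub_iff_add_eq] at hfix
  rw [← hfix, neg_add_eq_sub]

theorem apply_apply_eq_zero_of_mem_ker (hP : IsIdempotentElem P)
    (hPrange : LinearMap.range (P : Y →ₗ[𝕜] Y) =
      Submodule.map (B : X →ₗ[𝕜] Y) (LinearMap.ker (A : X →ₗ[𝕜] Y)))
    (hS3 : ∀ y, S (P y) = 0) {x : X} (hx : x ∈ LinearMap.ker (A : X →ₗ[𝕜] Y)) :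
    S (B x) = 0 := by
  have hBx : B x ∈ LinearMap.range (P : Y →ₗ[𝕜] Y) := hPrange ▸ Submodule.mem_map_of_mem hx
  rw [← (LinearMap.IsIdempotentElem.mem_range_iff hP.toLinearMap).mp hBx]
  exact hS3 _

theorem comp_add_smul_eq_one_add_smul_comp_one_sub (hP : IsIdempotentElem P)
    (hPrange : LinearMap.range (P : Y →ₗ[𝕜] Y) =
      Submodule.map (B : X →ₗ[𝕜] Y) (LinearMap.ker (A : X →ₗ[𝕜] Y)))
    (hPker : LinearMap.ker (P : Y →ₗ[𝕜] Y) = LinearMap.range (A : X →ₗ[𝕜] Y))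
    (hQ : IsIdempotentElem Q)
    (hQrange : LinearMap.range (Q : X →ₗ[𝕜] X) = LinearMap.ker (A : X →ₗ[𝕜] Y))
    (hS1 : ∀ y, Q (S y) = 0) (hS2 : ∀ y, A (S y) = y - P y) (hS3 : ∀ y, S (P y) = 0) (ε : 𝕜) :
    S.comp (A + ε • B) = (1 + ε • S.comp B).comp (1 - Q) := by
  ext x
  have hQx : Q x ∈ LinearMap.ker (A : X →ₗ[𝕜] Y) := hQrange ▸ LinearMap.mem_range_self _ x
  simp [apply_apply_eq_self_sub_apply hQ hQrange hPker hS1 hS2,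
    apply_apply_eq_zero_of_mem_ker hP hPrange hS3 hQx]
  abel

theorem injective_add_smul_of_norm_lt_one
    (hker : LinearMap.ker (A : X →ₗ[𝕜] Y) ⊓ LinearMap.ker (B : X →ₗ[𝕜] Y) = ⊥)
    (hP : IsIdempotentElem P)
    (hPrange : LinearMap.range (P : Y →ₗ[𝕜] Y) =
      Submodule.map (B : X →ₗ[𝕜] Y) (LinearMap.ker (A : X →ₗ[𝕜] Y)))
    (hPker : LinearMap.ker (P : Y →ₗ[𝕜] Y) = LinearMap.range (A : X →ₗ[𝕜] Y))
    (hQ : IsIdempotentElem Q)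
    (hQrange : LinearMap.range (Q : X →ₗ[𝕜] X) = LinearMap.ker (A : X →ₗ[𝕜] Y))
    (hS1 : ∀ y, Q (S y) = 0) (hS2 : ∀ y, A (S y) = y - P y) (hS3 : ∀ y, S (P y) = 0)
    {ε : 𝕜} (hε : ε ≠ 0) (hsmall : ‖ε • S.comp B‖ < 1) :
    Function.Injective (A + ε • B) := by
  refine (injective_iff_map_eq_zero _).mpr fun x hx => ?_
  have hfac :=
    comp_add_smul_eq_one_add_smul_comp_one_sub hP hPrange hPker hQ hQrange hS1 hS2 hS3 ε
  have hQx : (1 - Q) x = 0 := injective_one_add_of_norm_lt_one hsmall <| by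
    rw [map_zero, ← comp_apply, ← hfac, comp_apply, hx, map_zero]
  have hxQ : Q x = x := (sub_eq_zero.mp (by simpa using hQx)).symm
  have hA : A x = 0 := by
    change x ∈ LinearMap.ker (A : X →ₗ[𝕜] Y)
    rw [← hQrange, ← hxQ]
    exact LinearMap.mem_range_self _ x
  have hB : B x = 0 := by
    rw [add_apply, smul_apply, hA, zero_add] at hx
    exact (smul_eq_zero.mp hx).resolve_left hε
  exact (Submodule.mem_bot 𝕜).mp (hker ▸ Submodule.mem_inf.mpr ⟨hA, hB⟩)

theorem add_smul_comp_add_inv_smul (hS2 : ∀ y, A (S y) = y - P y)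
    (hT1 : ∀ y, T y ∈ LinearMap.ker (A : X →ₗ[𝕜] Y)) (hT2 : ∀ y, B (T y) = P y)
    {ε : 𝕜} (hε : ε ≠ 0) :
    (A + ε • B).comp (S + ε⁻¹ • T) = 1 + ε • B.comp S := by
  ext y
  have hAT : A (T y) = 0 := hT1 y
  simp [hS2, hAT, hT2, smul_smul, hε]
  abel

theorem norm_add_inv_smul_comp_smul_le {S T : Y →L[𝕜] X} (M : Y →L[𝕜] Y) {ε : 𝕜} (hε : ε ≠ 0)
    (hε1 : ‖ε‖ ≤ 1) : ‖(S + ε⁻¹ • T).comp (ε • M)‖ ≤ ‖S.comp M‖ + ‖T.comp M‖ := by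
  have hexpand : (S + ε⁻¹ • T).comp (ε • M) = ε • S.comp M + T.comp M := by
    ext y
    simp [smul_smul, hε]
  calc ‖(S + ε⁻¹ • T).comp (ε • M)‖ ≤ ‖ε‖ * ‖S.comp M‖ + ‖T.comp M‖ := by
        rw [hexpand, ← norm_smul]
        exact norm_add_le _ _
    _ ≤ ‖S.comp M‖ + ‖T.comp M‖ := by
        gcongr
        exact mul_le_of_le_one_left (norm_nonneg _) hε1

end Splitting

theorem stmt4_general
    {X Y : Type*} [NormedAddCommGroup X] [NormedSpace ℝ X]
    [NormedAddCommGroup Y] [NormedSpace ℝ Y] [CompleteSpace Y]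
    (A B : X →L[ℝ] Y) (P : Y →L[ℝ] Y) (Q : X →L[ℝ] X) (S T : Y →L[ℝ] X)
    (hker : LinearMap.ker (A : X →ₗ[ℝ] Y) ⊓ LinearMap.ker (B : X →ₗ[ℝ] Y) = ⊥)
    (hP : P.comp P = P)
    (hPrange : LinearMap.range (P : Y →ₗ[ℝ] Y) = Submodule.map (B : X →ₗ[ℝ] Y) (LinearMap.ker (A : X →ₗ[ℝ] Y)))
    (hPker : LinearMap.ker (P : Y →ₗ[ℝ] Y) = LinearMap.range (A : X →ₗ[ℝ] Y))
    (hQ : Q.comp Q = Q)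
    (hQrange : LinearMap.range (Q : X →ₗ[ℝ] X) = LinearMap.ker (A : X →ₗ[ℝ] Y))
    -- `S` realizes `A*(Id - P)`: it lands in `X̂ = ker Q` and inverts `A` on `R(A)`
    (hS1 : ∀ y : Y, Q (S y) = 0)
    (hS2 : ∀ y : Y, A (S y) = y - P y)
    (hS3 : ∀ y : Y, S (P y) = 0)
    -- `T` realizes `B*P`: it lands in `N(A)` and inverts `B` on `B·N(A)`
    (hT1 : ∀ y : Y, T y ∈ LinearMap.ker (A : X →ₗ[ℝ] Y))
    (hT2 : ∀ y : Y, B (T y) = P y) :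
    ∃ C > (0 : ℝ), ∃ ε₀ > (0 : ℝ), ∀ ε : ℝ, 0 < ε → ε < ε₀ →
      ∃ inv : Y →L[ℝ] X,
        inv.comp (A + ε • B) = ContinuousLinearMap.id ℝ X ∧
        (A + ε • B).comp inv = ContinuousLinearMap.id ℝ Y ∧
        ‖(S + ε⁻¹ • T) - inv‖ ≤ C := by
  have hsmall : ∀ᶠ ε in 𝓝 (0 : ℝ), ‖ε • B.comp S‖ < 1 / 2 ∧ ‖ε • S.comp B‖ < 1 ∧ ‖ε‖ < 1 := by
    refine ((tendsto_id.smul_const (B.comp S)).norm.eventually_lt_const ?_).and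
      (((tendsto_id.smul_const (S.comp B)).norm.eventually_lt_const ?_).and
        (tendsto_id.norm.eventually_lt_const ?_)) <;> norm_num
  obtain ⟨ε₀, hε₀, hε₀small⟩ := Metric.eventually_nhds_iff.mp hsmall
  refine ⟨2 * (‖S.comp (B.comp S)‖ + ‖T.comp (B.comp S)‖) + 1, by positivity, ε₀, hε₀,
    fun ε hε hεε₀ => ?_⟩
  obtain ⟨hBS, hSB, hε1⟩ := hε₀small (by rwa [Real.dist_0_eq_abs, abs_of_pos hε])
  obtain ⟨inv, hleft, hright, hdist⟩ := ContinuousLinearMap.exists_inverse_of_comp_eq_one_add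
    (injective_add_smul_of_norm_lt_one hker hP hPrange hPker hQ hQrange hS1 hS2 hS3 hε.ne' hSB)
    (add_smul_comp_add_inv_smul hS2 hT1 hT2 hε.ne') hBS.le
  refine ⟨inv, hleft, hright, hdist.trans ?_⟩
  linarith [norm_add_inv_smul_comp_smul_le (S := S) (T := T) (B.comp S) hε.ne' hε1.le]

/-- With `P` the projector onto `B·N(A)` along `R(A)`,
`Q` the projector onto `N(A)` along the complement `X̂`,
`S = A*(Id - P)` (where `A* : R(A) → X̂` inverts `A|_X̂`) and
`T = B*P` (where `B* : B·N(A) → N(A)` inverts `B|_N(A)`), one has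
`‖(A*(Id-P) + ε⁻¹ B*P) - (A + εB)⁻¹‖ = O(1)` as `ε → 0`. -/
theorem stmt4
    {X Y : Type*} [NormedAddCommGroup X] [NormedSpace ℝ X] [CompleteSpace X]
    [NormedAddCommGroup Y] [NormedSpace ℝ Y] [CompleteSpace Y]
    (A B : X →L[ℝ] Y) (P : Y →L[ℝ] Y) (Q : X →L[ℝ] X) (S T : Y →L[ℝ] X)
    (hfin : FiniteDimensional ℝ (LinearMap.ker (A : X →ₗ[ℝ] Y)))
    (hker : LinearMap.ker (A : X →ₗ[ℝ] Y) ⊓ LinearMap.ker (B : X →ₗ[ℝ] Y) = ⊥)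
    (hP : P.comp P = P)
    (hPrange : LinearMap.range (P : Y →ₗ[ℝ] Y) = Submodule.map (B : X →ₗ[ℝ] Y) (LinearMap.ker (A : X →ₗ[ℝ] Y)))
    (hPker : LinearMap.ker (P : Y →ₗ[ℝ] Y) = LinearMap.range (A : X →ₗ[ℝ] Y))
    (hQ : Q.comp Q = Q)
    (hQrange : LinearMap.range (Q : X →ₗ[ℝ] X) = LinearMap.ker (A : X →ₗ[ℝ] Y))
    -- `S` realizes `A*(Id - P)`: it lands in `X̂ = ker Q` and inverts `A` on `R(A)`
    (hS1 : ∀ y : Y, Q (S y) = 0)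
    (hS2 : ∀ y : Y, A (S y) = y - P y)
    (hS3 : ∀ y : Y, S (P y) = 0)
    -- `T` realizes `B*P`: it lands in `N(A)` and inverts `B` on `B·N(A)`
    (hT1 : ∀ y : Y, T y ∈ LinearMap.ker (A : X →ₗ[ℝ] Y))
    (hT2 : ∀ y : Y, B (T y) = P y) :
    ∃ C > (0 : ℝ), ∃ ε₀ > (0 : ℝ), ∀ ε : ℝ, 0 < ε → ε < ε₀ →
      ∃ inv : Y →L[ℝ] X,
        inv.comp (A + ε • B) = ContinuousLinearMap.id ℝ X ∧
        (A + ε • B).comp inv = ContinuousLinearMap.id ℝ Y ∧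
        ‖(S + ε⁻¹ • T) - inv‖ ≤ C :=
  stmt4_general A B P Q S T hker hP hPrange hPker hQ hQrange hS1 hS2 hS3 hT1 hT2
end

section
/- Under the hypotheses of the perturbation lemma (A, B : X → Y bounded linear, dim N(A) < ∞, N(A) ∩ N(B) = {0}, Y = B·N(A) ⊕ R(A)), if the complement X̂ of N(A) is chosen as X̂ = B⁻¹R(A) = {x ∈ X : Bx ∈ R(A)}, then for every y ∈ R(A) one has ‖(A* − (A + εB)⁻¹)y‖ = O(ε) as ε → 0. -/
/-! For `z ∈ R(A)` we have `(A + εB) A* z = z + ε B A* z`, hence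
`(A + εB)⁻¹ z = A* z - ε (A + εB)⁻¹ (B A* z)`. Because `X̂ = B⁻¹R(A)`, the vector `B A* z` lies in
`R(A)` again, so on `R(A)` the norm `N` of `(A + εB)⁻¹` satisfies `N ≤ ‖A*‖ + ε ‖B‖ ‖A*‖ N`, i.e.
`N ≤ 2 ‖A*‖` for small `ε`. The same identity at `z = y` then gives
`‖A* y - (A + εB)⁻¹ y‖ = ε ‖(A + εB)⁻¹ (B A* y)‖ = O(ε)`. -/

namespace ContinuousLinearMap

variable {X Y : Type*} [NormedAddCommGroup X] [NormedSpace ℝ X]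
  [NormedAddCommGroup Y] [NormedSpace ℝ Y]

theorem apply_eq_sub_smul_of_comp_add_smul_eq_id {A B : X →L[ℝ] Y} {inv : Y →L[ℝ] X} {ε : ℝ}
    (hinv : inv.comp (A + ε • B) = ContinuousLinearMap.id ℝ X) {x : X} {z : Y} (hx : A x = z) :
    inv z = x - ε • inv (B x) := by
  have h : inv ((A + ε • B) x) = x := by simpa using congr($hinv x)
  rw [add_apply, smul_apply, hx, map_add, map_smul] at h
  exact eq_sub_of_add_eq h

variable {A B : X →L[ℝ] Y} {S : Y →L[ℝ] X} {K : Submodule ℝ Y}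

theorem opNorm_comp_subtypeL_le_of_comp_add_smul_eq_id
    (hAS : ∀ z ∈ K, A (S z) = z) (hBS : ∀ z ∈ K, B (S z) ∈ K)
    {inv : Y →L[ℝ] X} {ε : ℝ} (hε : 0 ≤ ε)
    (hinv : inv.comp (A + ε • B) = ContinuousLinearMap.id ℝ X) :
    ‖inv.comp K.subtypeL‖ ≤ ‖S‖ + ε * (‖B‖ * ‖S‖) * ‖inv.comp K.subtypeL‖ := by
  set T := inv.comp K.subtypeL
  refine T.opNorm_le_bound (by positivity) fun z => ?_
  have hTz : T z = S z - ε • T ⟨B (S z), hBS z z.2⟩ :=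
    apply_eq_sub_smul_of_comp_add_smul_eq_id hinv (hAS z z.2)
  have hBSz : ‖(⟨B (S z), hBS z z.2⟩ : K)‖ ≤ ‖B‖ * (‖S‖ * ‖z‖) :=
    B.le_opNorm_of_le (S.le_opNorm z)
  calc ‖T z‖ ≤ ‖S z‖ + ε * ‖T ⟨B (S z), hBS z z.2⟩‖ := by
        rw [hTz]
        refine (norm_sub_le _ _).trans_eq ?_
        rw [norm_smul, Real.norm_of_nonneg hε]
    _ ≤ ‖S‖ * ‖z‖ + ε * (‖T‖ * (‖B‖ * (‖S‖ * ‖z‖))) := by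
        gcongr
        · exact S.le_opNorm z
        · exact T.le_opNorm_of_le hBSz
    _ = (‖S‖ + ε * (‖B‖ * ‖S‖) * ‖T‖) * ‖z‖ := by ring

theorem norm_apply_le_of_comp_add_smul_eq_id
    (hAS : ∀ z ∈ K, A (S z) = z) (hBS : ∀ z ∈ K, B (S z) ∈ K)
    {inv : Y →L[ℝ] X} {ε : ℝ} (hε : 0 ≤ ε) (hsmall : ε * (‖B‖ * ‖S‖) ≤ 1 / 2)
    (hinv : inv.comp (A + ε • B) = ContinuousLinearMap.id ℝ X) {z : Y} (hz : z ∈ K) :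
    ‖inv z‖ ≤ 2 * ‖S‖ * ‖z‖ := by
  have hT := opNorm_comp_subtypeL_le_of_comp_add_smul_eq_id hAS hBS hε hinv
  have hT2 : ‖inv.comp K.subtypeL‖ ≤ 2 * ‖S‖ := by
    nlinarith [norm_nonneg (inv.comp K.subtypeL)]
  exact (inv.comp K.subtypeL).le_of_opNorm_le hT2 ⟨z, hz⟩

end ContinuousLinearMap

theorem stmt5_general
    {X Y : Type*} [NormedAddCommGroup X] [NormedSpace ℝ X]
    [NormedAddCommGroup Y] [NormedSpace ℝ Y]
    (A B : X →L[ℝ] Y) (P : Y →L[ℝ] Y) (S : Y →L[ℝ] X)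
    (hPker : LinearMap.ker (P : Y →ₗ[ℝ] Y) = LinearMap.range (A : X →ₗ[ℝ] Y))
    -- `S` realizes `A*(Id - P)` with `X̂ = B⁻¹R(A)`: its values `S y` lie in
    -- `B⁻¹R(A)` and `A (S y) = (Id - P) y`
    (hS1 : ∀ y : Y, B (S y) ∈ LinearMap.range (A : X →ₗ[ℝ] Y))
    (hS2 : ∀ y : Y, A (S y) = y - P y) :
    ∀ y ∈ LinearMap.range (A : X →ₗ[ℝ] Y), ∃ C > (0 : ℝ), ∃ ε₀ > (0 : ℝ),
      ∀ ε : ℝ, 0 < ε → ε < ε₀ →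
        ∀ inv : Y →L[ℝ] X,
          inv.comp (A + ε • B) = ContinuousLinearMap.id ℝ X →
          (A + ε • B).comp inv = ContinuousLinearMap.id ℝ Y →
          ‖S y - inv y‖ ≤ C * ε := by
  intro y hy
  set c := ‖B‖ * ‖S‖
  refine ⟨2 * ‖S‖ * (c * ‖y‖) + 1, by positivity, 1 / (2 * (c + 1)), by positivity,
    fun ε hε hεlt inv hinv _ => ?_⟩
  have hAS : ∀ z ∈ LinearMap.range (A : X →ₗ[ℝ] Y), A (S z) = z := fun z hz => by
    have hPz : P z = 0 := by rwa [← hPker] at hz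
    rw [hS2, hPz, sub_zero]
  have hsmall : ε * c ≤ 1 / 2 := by
    rw [lt_div_iff₀ (by positivity)] at hεlt
    nlinarith [norm_nonneg B, norm_nonneg S]
  have hinv_bound : ‖inv (B (S y))‖ ≤ 2 * ‖S‖ * ‖B (S y)‖ :=
    ContinuousLinearMap.norm_apply_le_of_comp_add_smul_eq_id hAS (fun z _ => hS1 z) hε.le hsmall
      hinv (hS1 y)
  have hBSy : ‖B (S y)‖ ≤ c * ‖y‖ :=
    (B.le_opNorm_of_le (S.le_opNorm y)).trans_eq (mul_assoc _ _ _).symm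
  rw [ContinuousLinearMap.apply_eq_sub_smul_of_comp_add_smul_eq_id hinv (hAS y hy),
    sub_sub_cancel, norm_smul, Real.norm_of_nonneg hε.le]
  calc ε * ‖inv (B (S y))‖ ≤ ε * (2 * ‖S‖ * (c * ‖y‖)) := by
        gcongr
        exact hinv_bound.trans (by gcongr)
    _ ≤ (2 * ‖S‖ * (c * ‖y‖) + 1) * ε := by linarith

/-- When the complement `X̂` of `N(A)` is chosen as
`X̂ = B⁻¹R(A) = {x : Bx ∈ R(A)}`, the operator `S = A*(Id - P)` satisfies,
for every `y ∈ R(A)`, `‖(A* - (A + εB)⁻¹) y‖ = O(ε)` as `ε → 0`. -/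
theorem stmt5
    {X Y : Type*} [NormedAddCommGroup X] [NormedSpace ℝ X] [CompleteSpace X]
    [NormedAddCommGroup Y] [NormedSpace ℝ Y] [CompleteSpace Y]
    (A B : X →L[ℝ] Y) (P : Y →L[ℝ] Y) (S : Y →L[ℝ] X)
    (hfin : FiniteDimensional ℝ (LinearMap.ker (A : X →ₗ[ℝ] Y)))
    (hker : LinearMap.ker (A : X →ₗ[ℝ] Y) ⊓ LinearMap.ker (B : X →ₗ[ℝ] Y) = ⊥)
    (hP : P.comp P = P)
    (hPrange : LinearMap.range (P : Y →ₗ[ℝ] Y) = Submodule.map (B : X →ₗ[ℝ] Y) (LinearMap.ker (A : X →ₗ[ℝ] Y)))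
    (hPker : LinearMap.ker (P : Y →ₗ[ℝ] Y) = LinearMap.range (A : X →ₗ[ℝ] Y))
    -- `S` realizes `A*(Id - P)` with `X̂ = B⁻¹R(A)`: its values `S y` lie in
    -- `B⁻¹R(A)` and `A (S y) = (Id - P) y`
    (hS1 : ∀ y : Y, B (S y) ∈ LinearMap.range (A : X →ₗ[ℝ] Y))
    (hS2 : ∀ y : Y, A (S y) = y - P y)
    (hS3 : ∀ y : Y, S (P y) = 0) :
    ∀ y ∈ LinearMap.range (A : X →ₗ[ℝ] Y), ∃ C > (0 : ℝ), ∃ ε₀ > (0 : ℝ),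
      ∀ ε : ℝ, 0 < ε → ε < ε₀ →
        ∀ inv : Y →L[ℝ] X,
          inv.comp (A + ε • B) = ContinuousLinearMap.id ℝ X →
          (A + ε • B).comp inv = ContinuousLinearMap.id ℝ Y →
          ‖S y - inv y‖ ≤ C * ε :=
  stmt5_general A B P S hPker hS1 hS2
end
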